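/- Monotonicity of RC11^Ex86 consistency under mode strengthening: Let G and G' be execution graphs identical except that the labeling of G' assigns to each event a mode at least as strong (in the access-mode order ⊑) as in G, so that for every mode-threshold set, e.g., E^⊒rel, W^⊒rlx, R^⊒rlx, E^⊒acq, F^≥sf, the set computed in G is contained in the one computed in G'. Then every derived relation of G among sw, hb, po_rc, ppo_asm, psc is contained in the corresponding relation of G', and consequently if G' is RC11^Ex86-consistent then G is RC11^Ex86-consistent. -/

import Mathlib

/-- Synchronizes-with. -/
def swRel {α : Type*} (Erel Wrlx Rrlx Eacq F : Set α)
    (po rf : α → α → Prop) : α → α → Prop :=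
  fun a d => a ∈ Erel ∧ d ∈ Eacq ∧
    ∃ w r, (a = w ∨ (a ∈ F ∧ po a w)) ∧ w ∈ Wrlx ∧
      Relation.TransGen rf w r ∧ r ∈ Rrlx ∧
      (r = d ∨ (po r d ∧ d ∈ F))

/-- `po_rc`. -/
def poRc {α : Type*} (Wnt RMWtso FgeSf W : Set α) (loc : α → ℕ)
    (po : α → α → Prop) : α → α → Prop :=
  fun a b => (a ∉ Wnt ∧ po a b) ∨ (po a b ∧ b ∈ RMWtso ∪ FgeSf) ∨
    (po a b ∧ loc a = loc b ∧ b ∈ W)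

/-- `ppo_asm`. -/
def ppoAsm {α : Type*} (Wnt RMWtso FgeSf Fsc Rtso Wtso Rd : Set α)
    (po : α → α → Prop) : α → α → Prop :=
  fun a b =>
    (po a b ∧ b ∈ RMWtso ∪ FgeSf) ∨
    (a ∈ Rtso ∪ RMWtso ∪ Fsc ∧ po a b) ∨
    (a ∈ FgeSf ∧ po a b ∧ b ∉ Rd) ∨
    (a ∈ Wtso ∧ po a b ∧ b ∉ Rd ∧ b ∉ Wnt) ∨
    (a ∉ Rd ∧ a ∉ Wnt ∧ po a b ∧ b ∈ Wtso)

/-- `hb := (po_rc ∪ sw)⁺`. -/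
def hbRel {α : Type*} (Erel Wrlx Rrlx Eacq F Wnt RMWtso FgeSf W : Set α)
    (loc : α → ℕ) (po rf : α → α → Prop) : α → α → Prop :=
  Relation.TransGen (fun a b =>
    poRc Wnt RMWtso FgeSf W loc po a b ∨ swRel Erel Wrlx Rrlx Eacq F po rf a b)

/-- `eco := (rfe ∪ mo ∪ rb)⁺`. -/
def ecoRel {α : Type*} (rfe mo rb : α → α → Prop) : α → α → Prop :=
  Relation.TransGen (fun a b => rfe a b ∨ mo a b ∨ rb a b)

/-- `scb := po ∪ po≠loc;hb;po≠loc ∪ hb|loc ∪ mo ∪ rb`. -/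
def scbRel {α : Type*} (loc : α → ℕ) (po hb mo rb : α → α → Prop) :
    α → α → Prop :=
  fun a b => po a b ∨
    (∃ c d, po a c ∧ loc a ≠ loc c ∧ hb c d ∧ po d b ∧ loc d ≠ loc b) ∨
    (hb a b ∧ loc a = loc b) ∨ mo a b ∨ rb a b

/-- `psc_base := (⦗E^sc⦘ ∪ ⦗F^sc⦘;hb?);scb;(⦗E^sc⦘ ∪ hb?;⦗F^sc⦘)`. -/
def pscBase {α : Type*} (Esc Fsc : Set α) (loc : α → ℕ)
    (po hb mo rb : α → α → Prop) : α → α → Prop :=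
  fun a b => ∃ c d,
    ((a = c ∧ a ∈ Esc) ∨ (a ∈ Fsc ∧ (a = c ∨ hb a c))) ∧
    scbRel loc po hb mo rb c d ∧
    ((d = b ∧ b ∈ Esc) ∨ (b ∈ Fsc ∧ (d = b ∨ hb d b)))

/-- `psc_fence := ⦗F^sc⦘;(hb ∪ hb;eco;hb);⦗F^sc⦘`. -/
def pscFence {α : Type*} (Fsc : Set α) (hb eco : α → α → Prop) :
    α → α → Prop :=
  fun a b => a ∈ Fsc ∧ b ∈ Fsc ∧
    (hb a b ∨ ∃ c d, hb a c ∧ eco c d ∧ hb d b)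

/-- `psc := psc_base ∪ psc_fence`. -/
def pscRel {α : Type*} (Esc Fsc : Set α) (loc : α → ℕ)
    (po hb mo rb eco : α → α → Prop) : α → α → Prop :=
  fun a b => pscBase Esc Fsc loc po hb mo rb a b ∨ pscFence Fsc hb eco a b

/-! Every mode set occurs only positively in the definitions of `sw`, `po_rc`, `ppo_asm`, `hb` and
`psc`, except `W^nt`, which occurs only under a negation; so strengthening modes (which enlarges
the mode sets and shrinks `W^nt`) enlarges each derived relation. The consistency conditions are
irreflexivity of relations built monotonically from these, so they pass from `G'` back to `G`. -/

theorem Irreflexive.of_le {α : Type*} {r s : α → α → Prop} (hs : Irreflexive s) (h : r ≤ s) :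
    Irreflexive r :=
  fun a ha => hs a (h a a ha)

section ModeStrengthening

variable {α : Type*}

theorem swRel_mono {Erel Wrlx Rrlx Eacq Erel' Wrlx' Rrlx' Eacq' : Set α} (F : Set α)
    (po rf : α → α → Prop) (hrel : Erel ⊆ Erel') (hw : Wrlx ⊆ Wrlx') (hr : Rrlx ⊆ Rrlx')
    (hacq : Eacq ⊆ Eacq') :
    swRel Erel Wrlx Rrlx Eacq F po rf ≤ swRel Erel' Wrlx' Rrlx' Eacq' F po rf := by
  rintro a d ⟨ha, hd, w, r, haw, hw', hwr, hr', hrd⟩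
  exact ⟨hrel ha, hacq hd, w, r, haw, hw hw', hwr, hr hr', hrd⟩

theorem poRc_mono {Wnt RMWtso FgeSf Wnt' RMWtso' FgeSf' : Set α} (W : Set α) (loc : α → ℕ)
    (po : α → α → Prop) (hnt : Wnt' ⊆ Wnt) (hrmw : RMWtso ⊆ RMWtso') (hf : FgeSf ⊆ FgeSf') :
    poRc Wnt RMWtso FgeSf W loc po ≤ poRc Wnt' RMWtso' FgeSf' W loc po := by
  rintro a b (⟨ha, hab⟩ | ⟨hab, hb⟩ | hloc)
  · exact Or.inl ⟨fun ha' => ha (hnt ha'), hab⟩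
  · exact Or.inr (Or.inl ⟨hab, Set.union_subset_union hrmw hf hb⟩)
  · exact Or.inr (Or.inr hloc)

theorem ppoAsm_mono {Wnt RMWtso FgeSf Fsc Rtso Wtso Wnt' RMWtso' FgeSf' Fsc' Rtso' Wtso' : Set α}
    (Rd : Set α) (po : α → α → Prop) (hnt : Wnt' ⊆ Wnt) (hrmw : RMWtso ⊆ RMWtso')
    (hf : FgeSf ⊆ FgeSf') (hsc : Fsc ⊆ Fsc') (hrt : Rtso ⊆ Rtso') (hwt : Wtso ⊆ Wtso') :
    ppoAsm Wnt RMWtso FgeSf Fsc Rtso Wtso Rd po ≤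
      ppoAsm Wnt' RMWtso' FgeSf' Fsc' Rtso' Wtso' Rd po := by
  rintro a b (⟨hab, hb⟩ | ⟨ha, hab⟩ | ⟨ha, hab, hb⟩ | ⟨ha, hab, hb, hb'⟩ | ⟨ha, ha', hab, hb⟩)
  · exact Or.inl ⟨hab, Set.union_subset_union hrmw hf hb⟩
  · exact Or.inr (Or.inl
      ⟨Set.union_subset_union (Set.union_subset_union hrt hrmw) hsc ha, hab⟩)
  · exact Or.inr (Or.inr (Or.inl ⟨hf ha, hab, hb⟩))
  · exact Or.inr (Or.inr (Or.inr (Or.inl ⟨hwt ha, hab, hb, fun h => hb' (hnt h)⟩)))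
  · exact Or.inr (Or.inr (Or.inr (Or.inr ⟨ha, fun h => ha' (hnt h), hab, hwt hb⟩)))

theorem hbRel_mono {Erel Wrlx Rrlx Eacq Wnt RMWtso FgeSf : Set α}
    {Erel' Wrlx' Rrlx' Eacq' Wnt' RMWtso' FgeSf' : Set α} (F W : Set α) (loc : α → ℕ)
    (po rf : α → α → Prop) (hrel : Erel ⊆ Erel') (hw : Wrlx ⊆ Wrlx') (hr : Rrlx ⊆ Rrlx')
    (hacq : Eacq ⊆ Eacq') (hnt : Wnt' ⊆ Wnt) (hrmw : RMWtso ⊆ RMWtso') (hf : FgeSf ⊆ FgeSf') :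
    hbRel Erel Wrlx Rrlx Eacq F Wnt RMWtso FgeSf W loc po rf ≤
      hbRel Erel' Wrlx' Rrlx' Eacq' F Wnt' RMWtso' FgeSf' W loc po rf :=
  Relation.TransGen.mono fun a b =>
    Or.imp (poRc_mono W loc po hnt hrmw hf a b) (swRel_mono F po rf hrel hw hr hacq a b)

variable {hb hb' : α → α → Prop}

theorem scbRel_mono (loc : α → ℕ) (po mo rb : α → α → Prop) (hhb : hb ≤ hb') :
    scbRel loc po hb mo rb ≤ scbRel loc po hb' mo rb := by
  rintro a b (hpo | ⟨c, d, hac, hlac, hcd, hdb, hldb⟩ | ⟨hab, hloc⟩ | hmo | hrb)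
  · exact Or.inl hpo
  · exact Or.inr (Or.inl ⟨c, d, hac, hlac, hhb c d hcd, hdb, hldb⟩)
  · exact Or.inr (Or.inr (Or.inl ⟨hhb a b hab, hloc⟩))
  · exact Or.inr (Or.inr (Or.inr (Or.inl hmo)))
  · exact Or.inr (Or.inr (Or.inr (Or.inr hrb)))

theorem pscBase_mono {Esc Fsc Esc' Fsc' : Set α} (loc : α → ℕ) (po mo rb : α → α → Prop)
    (hE : Esc ⊆ Esc') (hF : Fsc ⊆ Fsc') (hhb : hb ≤ hb') :
    pscBase Esc Fsc loc po hb mo rb ≤ pscBase Esc' Fsc' loc po hb' mo rb := by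
  rintro a b ⟨c, d, hac, hcd, hdb⟩
  refine ⟨c, d, ?_, scbRel_mono loc po mo rb hhb c d hcd, ?_⟩
  · exact hac.imp (And.imp_right (@hE a)) (And.imp (@hF a) (Or.imp_right (hhb a c)))
  · exact hdb.imp (And.imp_right (@hE b)) (And.imp (@hF b) (Or.imp_right (hhb d b)))

theorem pscFence_mono {Fsc Fsc' : Set α} (eco : α → α → Prop) (hF : Fsc ⊆ Fsc')
    (hhb : hb ≤ hb') : pscFence Fsc hb eco ≤ pscFence Fsc' hb' eco := by
  rintro a b ⟨ha, hb, hab | ⟨c, d, hac, hcd, hdb⟩⟩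
  · exact ⟨hF ha, hF hb, Or.inl (hhb a b hab)⟩
  · exact ⟨hF ha, hF hb, Or.inr ⟨c, d, hhb a c hac, hcd, hhb d b hdb⟩⟩

theorem pscRel_mono {Esc Fsc Esc' Fsc' : Set α} (loc : α → ℕ) (po mo rb eco : α → α → Prop)
    (hE : Esc ⊆ Esc') (hF : Fsc ⊆ Fsc') (hhb : hb ≤ hb') :
    pscRel Esc Fsc loc po hb mo rb eco ≤ pscRel Esc' Fsc' loc po hb' mo rb eco :=
  fun a b => Or.imp (pscBase_mono loc po mo rb hE hF hhb a b) (pscFence_mono eco hF hhb a b)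

end ModeStrengthening

/-- monotonicity under mode strengthening: if every
upward-closed mode set of `G` is contained in the corresponding set of `G'`
(and `W^nt` shrinks), then each derived relation `sw`, `hb`, `po_rc`,
`ppo_asm`, `psc` of `G` is contained in that of `G'`; consequently, the
RC11^Ex86 consistency conditions for `G'` imply those for `G`. -/
theorem stmt19 {α : Type*}
    (Erel Wrlx Rrlx Eacq F Wnt RMWtso FgeSf W Fsc Rtso Wtso Rd Esc : Set α)
    (Erel' Wrlx' Rrlx' Eacq' Wnt' RMWtso' FgeSf' Fsc' Rtso' Wtso' Esc' : Set α)
    (loc : α → ℕ) (po rf rfe mo rb : α → α → Prop)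
    (h1 : Erel ⊆ Erel') (h2 : Wrlx ⊆ Wrlx') (h3 : Rrlx ⊆ Rrlx')
    (h4 : Eacq ⊆ Eacq') (h5 : Wnt' ⊆ Wnt) (h6 : RMWtso ⊆ RMWtso')
    (h7 : FgeSf ⊆ FgeSf') (h8 : Fsc ⊆ Fsc') (h9 : Rtso ⊆ Rtso')
    (h10 : Wtso ⊆ Wtso') (h11 : Esc ⊆ Esc') :
    (∀ a b, swRel Erel Wrlx Rrlx Eacq F po rf a b →
        swRel Erel' Wrlx' Rrlx' Eacq' F po rf a b) ∧
    (∀ a b, poRc Wnt RMWtso FgeSf W loc po a b →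
        poRc Wnt' RMWtso' FgeSf' W loc po a b) ∧
    (∀ a b, ppoAsm Wnt RMWtso FgeSf Fsc Rtso Wtso Rd po a b →
        ppoAsm Wnt' RMWtso' FgeSf' Fsc' Rtso' Wtso' Rd po a b) ∧
    (∀ a b, hbRel Erel Wrlx Rrlx Eacq F Wnt RMWtso FgeSf W loc po rf a b →
        hbRel Erel' Wrlx' Rrlx' Eacq' F Wnt' RMWtso' FgeSf' W loc po rf a b) ∧
    (∀ a b, pscRel Esc Fsc loc po
          (hbRel Erel Wrlx Rrlx Eacq F Wnt RMWtso FgeSf W loc po rf)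
          mo rb (ecoRel rfe mo rb) a b →
        pscRel Esc' Fsc' loc po
          (hbRel Erel' Wrlx' Rrlx' Eacq' F Wnt' RMWtso' FgeSf' W loc po rf)
          mo rb (ecoRel rfe mo rb) a b) ∧
    ((Irreflexive (fun a b => ∃ c,
          hbRel Erel' Wrlx' Rrlx' Eacq' F Wnt' RMWtso' FgeSf' W loc po rf a c ∧
          (c = b ∨ ecoRel rfe mo rb c b)) →
      Irreflexive (fun a b => ∃ c,
          hbRel Erel Wrlx Rrlx Eacq F Wnt RMWtso FgeSf W loc po rf a c ∧
          (c = b ∨ ecoRel rfe mo rb c b))) ∧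
     (Irreflexive (Relation.TransGen (fun a b =>
          ppoAsm Wnt' RMWtso' FgeSf' Fsc' Rtso' Wtso' Rd po a b ∨
          ecoRel rfe mo rb a b)) →
      Irreflexive (Relation.TransGen (fun a b =>
          ppoAsm Wnt RMWtso FgeSf Fsc Rtso Wtso Rd po a b ∨
          ecoRel rfe mo rb a b))) ∧
     (Irreflexive (Relation.TransGen (pscRel Esc' Fsc' loc po
          (hbRel Erel' Wrlx' Rrlx' Eacq' F Wnt' RMWtso' FgeSf' W loc po rf)
          mo rb (ecoRel rfe mo rb))) →
      Irreflexive (Relation.TransGen (pscRel Esc Fsc loc po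
          (hbRel Erel Wrlx Rrlx Eacq F Wnt RMWtso FgeSf W loc po rf)
          mo rb (ecoRel rfe mo rb))))) := by
  have hsw := swRel_mono F po rf h1 h2 h3 h4
  have hporc := poRc_mono W loc po h5 h6 h7
  have hppo := ppoAsm_mono Rd po h5 h6 h7 h8 h9 h10
  have hhb := hbRel_mono F W loc po rf h1 h2 h3 h4 h5 h6 h7
  have hpsc := pscRel_mono loc po mo rb (ecoRel rfe mo rb) h11 h8 hhb
  refine ⟨hsw, hporc, hppo, hhb, hpsc, fun hirr => hirr.of_le ?_,
    fun hirr => hirr.of_le ?_, fun hirr => hirr.of_le (Relation.TransGen.mono hpsc)⟩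
  · exact fun a b ⟨c, hac, hcb⟩ => ⟨c, hhb a c hac, hcb⟩
  · exact Relation.TransGen.mono fun a b => Or.imp_left (hppo a b)
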